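/- If ρ is a separable density matrix on ℂ^{d_A} ⊗ ℂ^{d_B}, then its partial transposition ρ^{T_A} is again a separable density matrix (in particular it is positive semidefinite with trace 1 and admits a decomposition into Kronecker products of rank-one projectors). -/

import Mathlib

open scoped BigOperators ComplexOrder

/-- The rank-one matrix `x x*`, with entries `(x x*)_{ij} = x i * conj (x j)`. -/
def vecProjector {d : ℕ} (x : Fin d → ℂ) : Matrix (Fin d) (Fin d) ℂ :=
  fun i j => x i * (starRingEnd ℂ) (x j)

/-- A density matrix on `ℂ^{d_A} ⊗ ℂ^{d_B}` is separable if it is a finite convex combination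
of Kronecker products of rank-one projectors onto unit vectors. -/
def SeparableState {dA dB : ℕ}
    (ρ : Matrix (Fin dA × Fin dB) (Fin dA × Fin dB) ℂ) : Prop :=
  ∃ (K : ℕ) (p : Fin K → ℝ) (x : Fin K → Fin dA → ℂ) (y : Fin K → Fin dB → ℂ),
    (∀ k, 0 ≤ p k) ∧ (∑ k, p k = 1) ∧
    (∀ k, ∑ a, Complex.normSq (x k a) = 1) ∧
    (∀ k, ∑ b, Complex.normSq (y k b) = 1) ∧
    ρ = ∑ k, (p k : ℂ) •
      Matrix.kroneckerMap (· * ·) (vecProjector (x k)) (vecProjector (y k))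

/-- Partial transposition with respect to the first factor:
`(ρ^{T_A})_{(i,μ),(j,ν)} = ρ_{(j,μ),(i,ν)}`. -/
def partialTransposeA {dA dB : ℕ}
    (ρ : Matrix (Fin dA × Fin dB) (Fin dA × Fin dB) ℂ) :
    Matrix (Fin dA × Fin dB) (Fin dA × Fin dB) ℂ :=
  fun p q => ρ (q.1, p.2) (p.1, q.2)

/-!
Transposition of a rank-one projector `x x*` is the projector `x̄ x̄*` onto the conjugate unit
vector, and partial transposition acts on `A ⊗ B` as `Aᵀ ⊗ B`. Hence a separable decomposition of
`ρ` with vectors `x_k, y_k` gives one of `ρ^{T_A}` with the same weights and vectors `x̄_k, y_k`.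
Separable states are positive semidefinite as convex combinations of Kronecker products of
positive semidefinite matrices, and partial transposition does not move the diagonal.
-/

open Matrix
open scoped Kronecker

section vecProjector

variable {d : ℕ}

theorem vecProjector_eq_vecMulVec (x : Fin d → ℂ) : vecProjector x = vecMulVec x (star x) := rfl

theorem posSemidef_vecProjector (x : Fin d → ℂ) : (vecProjector x).PosSemidef := by
  rw [vecProjector_eq_vecMulVec]
  exact posSemidef_vecMulVec_self_star x

theorem transpose_vecProjector (x : Fin d → ℂ) : (vecProjector x)ᵀ = vecProjector (star x) := by
  ext i j
  simp [vecProjector, mul_comm]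

end vecProjector

section partialTransposeA

variable {dA dB : ℕ}

theorem partialTransposeA_sum {ι : Type*} (s : Finset ι)
    (M : ι → Matrix (Fin dA × Fin dB) (Fin dA × Fin dB) ℂ) :
    partialTransposeA (∑ k ∈ s, M k) = ∑ k ∈ s, partialTransposeA (M k) := by
  ext p q
  simp [partialTransposeA, Matrix.sum_apply]

theorem partialTransposeA_smul (c : ℂ) (M : Matrix (Fin dA × Fin dB) (Fin dA × Fin dB) ℂ) :
    partialTransposeA (c • M) = c • partialTransposeA M := rfl

theorem partialTransposeA_kronecker (A : Matrix (Fin dA) (Fin dA) ℂ)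
    (B : Matrix (Fin dB) (Fin dB) ℂ) : partialTransposeA (A ⊗ₖ B) = Aᵀ ⊗ₖ B := rfl

theorem trace_partialTransposeA (ρ : Matrix (Fin dA × Fin dB) (Fin dA × Fin dB) ℂ) :
    (partialTransposeA ρ).trace = ρ.trace := rfl

end partialTransposeA

namespace SeparableState

variable {dA dB : ℕ} {ρ : Matrix (Fin dA × Fin dB) (Fin dA × Fin dB) ℂ}

theorem partialTransposeA (h : SeparableState ρ) : SeparableState (partialTransposeA ρ) := by
  obtain ⟨K, p, x, y, hp, hp_sum, hx, hy, rfl⟩ := h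
  refine ⟨K, p, fun k => star (x k), y, hp, hp_sum, fun k => ?_, hy, ?_⟩
  · simpa [Complex.normSq_conj] using hx k
  · simp only [partialTransposeA_sum, partialTransposeA_smul, partialTransposeA_kronecker,
      transpose_vecProjector]

theorem posSemidef (h : SeparableState ρ) : ρ.PosSemidef := by
  obtain ⟨K, p, x, y, hp, -, -, -, rfl⟩ := h
  refine posSemidef_sum _ fun k _ => ?_
  have hpk : (0 : ℂ) ≤ p k := Complex.zero_le_real.mpr (hp k)
  exact ((posSemidef_vecProjector (x k)).kronecker (posSemidef_vecProjector (y k))).smul hpk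

end SeparableState

theorem partialTranspose_of_separable_is_separable_general (dA dB : ℕ)
    (ρ : Matrix (Fin dA × Fin dB) (Fin dA × Fin dB) ℂ)
    (htr : ρ.trace = 1) (hsep : SeparableState ρ) :
    SeparableState (partialTransposeA ρ) ∧
      (partialTransposeA ρ).PosSemidef ∧ (partialTransposeA ρ).trace = 1 :=
  ⟨hsep.partialTransposeA, hsep.partialTransposeA.posSemidef,
    (trace_partialTransposeA ρ).trans htr⟩

/-- If `ρ` is a separable density matrix on `ℂ^{d_A} ⊗ ℂ^{d_B}`, then its partial
transposition `ρ^{T_A}` is again a separable density matrix: it is positive semidefinite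
with trace 1 and admits a decomposition into Kronecker products of rank-one projectors. -/
theorem partialTranspose_of_separable_is_separable (dA dB : ℕ)
    (ρ : Matrix (Fin dA × Fin dB) (Fin dA × Fin dB) ℂ)
    (hpsd : ρ.PosSemidef) (htr : ρ.trace = 1) (hsep : SeparableState ρ) :
    SeparableState (partialTransposeA ρ) ∧
      (partialTransposeA ρ).PosSemidef ∧ (partialTransposeA ρ).trace = 1 :=
  partialTranspose_of_separable_is_separable_general dA dB ρ htr hsep
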